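/- Let D be a block-diagonal matrix with symmetric positive definite blocks D₁, …, D_b, let ρ > 0 satisfy ρ < min over i of the smallest eigenvalue of Dᵢ, let Φ = (I + D/ρ)⁻¹, and P = (1/b)·(J_b ⊗ I_p). Then every eigenvalue of M = (I − P − Φ)(I − 2P) is real. -/

import Mathlib

open Matrix

/-- The averaging projection `P = (1/b)·(J_b ⊗ I_p)` viewed on the index type
`Fin p × Fin b` used by `Matrix.blockDiagonal`. -/
noncomputable def avgProj (p b : ℕ) : Matrix (Fin p × Fin b) (Fin p × Fin b) ℝ :=
  fun x y => if x.1 = y.1 then (b : ℝ)⁻¹ else 0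

/-!
Write `U = 1 - 2P` and `V = 1 - 2Φ`. Since `P` is an orthogonal projection, `U` is a symmetric
involution, so `2M = (U + V)U = 1 + VU`. The bound `ρ < λ_min(Dᵢ)` makes `W = 1 + D/ρ` exceed
`2`, hence `V = 1 - 2W⁻¹` is positive definite. Conjugating by `V^{1/2}` turns `VU` into the
symmetric matrix `V^{1/2} U V^{1/2}`, so `M` is similar to a real symmetric matrix.
-/

lemma IsIdempotentElem.one_sub_two_smul_mul_self {R A : Type*} [Semiring R] [Ring A]
    [Module R A] {p : A} (hp : IsIdempotentElem p) :
    (1 - (2 : R) • p) * (1 - (2 : R) • p) = 1 := by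
  rw [two_smul]
  simp only [sub_mul, mul_sub, add_mul, mul_add, one_mul, mul_one, hp.eq]
  abel

namespace Matrix

lemma blockDiagonal_sub_smul_one {o m R : Type*} [DecidableEq o] [DecidableEq m] [Ring R]
    (D : o → Matrix m m R) (r : R) :
    blockDiagonal (fun i => D i - r • 1) = blockDiagonal D - r • 1 := by
  rw [show (fun i => D i - r • 1) = D - r • 1 from rfl, blockDiagonal_sub, blockDiagonal_smul,
    blockDiagonal_one]

variable {n : Type*} [Fintype n] [DecidableEq n]

lemma im_eq_zero_of_mem_spectrum_map_of_isHermitian_conj {M : Matrix n n ℝ}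
    (T : (Matrix n n ℝ)ˣ) (hT : ((↑T⁻¹ : Matrix n n ℝ) * M * T).IsHermitian) {μ : ℂ}
    (hμ : μ ∈ spectrum ℂ (M.map (algebraMap ℝ ℂ))) : μ.im = 0 := by
  set T' := Units.map (algebraMap ℝ ℂ).mapMatrix.toMonoidHom T
  have hconj : (↑T'⁻¹ : Matrix n n ℂ) * M.map (algebraMap ℝ ℂ) * T' =
      ((↑T⁻¹ : Matrix n n ℝ) * M * T).map (algebraMap ℝ ℂ) := by
    simp only [T', Units.coe_map_inv, Units.coe_map, Matrix.map_mul]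
    rfl
  rw [← spectrum.units_conjugate' (u := T'), hconj,
    (hT.map (algebraMap ℝ ℂ) fun x => (Complex.conj_ofReal x).symm).spectrum_eq_image_range] at hμ
  obtain ⟨_, ⟨i, rfl⟩, rfl⟩ := hμ
  simp

section Positivity

open scoped ComplexOrder MatrixOrder

variable {𝕜 : Type*} [RCLike 𝕜]

lemma posDef_sub_smul_one_of_forall_lt {A : Matrix n n 𝕜} (hA : A.IsHermitian) {ρ : ℝ}
    (h : ∀ x ∈ spectrum ℝ A, ρ < x) : (A - ρ • 1).PosDef := by
  rw [← isStrictlyPositive_iff_posDef,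
    StarOrderedRing.isStrictlyPositive_iff_spectrum_pos (R := ℝ) _
      (hA.sub ((IsSelfAdjoint.all ρ).smul (IsSelfAdjoint.one _))),
    ← Algebra.algebraMap_eq_smul_one, ← spectrum.sub_singleton_eq]
  rintro _ ⟨x, hx, _, rfl, rfl⟩
  linarith [h x hx]

lemma PosDef.blockDiagonal {m o : Type*} [Fintype m] [DecidableEq m] [Fintype o] [DecidableEq o]
    {D : o → Matrix m m 𝕜} (hD : ∀ i, (D i).PosDef) : (blockDiagonal D).PosDef := by
  set S := fun i => CFC.sqrt (D i)
  have hS : Matrix.blockDiagonal D = (Matrix.blockDiagonal S)ᴴ * Matrix.blockDiagonal S := by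
    rw [blockDiagonal_conjTranspose, ← blockDiagonal_mul]
    congr 1
    ext1 i
    simp [S, (CFC.sqrt_nonneg (D i)).posSemidef.isHermitian.eq,
      CFC.sqrt_mul_sqrt_self _ (hD i).posSemidef.nonneg]
  have hunit : IsUnit (Matrix.blockDiagonal S) :=
    (Pi.isUnit_iff.mpr fun i => (CFC.isUnit_sqrt_iff _ (hD i).posSemidef.nonneg).mpr
      (hD i).isUnit).map (blockDiagonalRingHom m o 𝕜)
  rw [hS]
  exact Matrix.PosDef.conjTranspose_mul_self _ (mulVec_injective_of_isUnit hunit)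

lemma posDef_one_sub_smul_inv {W : Matrix n n 𝕜} {c : ℝ} (hc : 0 < c)
    (hK : (W - c • 1).PosDef) : (1 - c • W⁻¹).PosDef := by
  set K := W - c • 1
  have hW : W.PosDef := by
    simpa [K] using hK.add_posSemidef (PosSemidef.one.smul hc.le)
  have hW_det : IsUnit W.det := (isUnit_iff_isUnit_det _).mp hW.isUnit
  -- `W` and `K` commute, so `W * K = K² + c K` is positive definite.
  have hWK : (W * K).PosDef := by
    have : W * K = Kᴴ * K + c • K := by
      rw [hK.1.eq, ← smul_one_mul, ← add_mul, sub_add_cancel]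
    rw [this]
    exact (hK.smul hc).posSemidef_add (posSemidef_conjTranspose_mul_self K)
  have : 1 - c • W⁻¹ = W⁻¹ᴴ * (W * K) * W⁻¹ := by
    rw [hW.inv.1.eq, ← mul_assoc, nonsing_inv_mul _ hW_det, one_mul, sub_mul, smul_mul, one_mul,
      mul_nonsing_inv _ hW_det]
  rw [this]
  exact hWK.conjTranspose_mul_mul_same (mulVec_injective_of_isUnit hW.inv.isUnit)

lemma PosDef.exists_units_isHermitian_conj_mul {V U : Matrix n n 𝕜} (hV : V.PosDef)
    (hU : U.IsHermitian) :
    ∃ T : (Matrix n n 𝕜)ˣ, ((↑T⁻¹ : Matrix n n 𝕜) * (V * U) * T).IsHermitian := by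
  have hV0 : 0 ≤ V := hV.posSemidef.nonneg
  obtain ⟨T, hT⟩ := (CFC.isUnit_sqrt_iff V).mpr hV.isUnit
  have hTh : (T : Matrix n n 𝕜).IsHermitian := hT ▸ (CFC.sqrt_nonneg V).posSemidef.isHermitian
  refine ⟨T, ?_⟩
  have : (↑T⁻¹ : Matrix n n 𝕜) * (V * U) * T = T * U * T := by
    rw [← CFC.sqrt_mul_sqrt_self V, ← hT]
    simp [mul_assoc]
  rw [this]
  simpa [hTh.eq, mul_assoc] using isHermitian_conjTranspose_mul_mul (T : Matrix n n 𝕜) hU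

end Positivity

end Matrix

lemma avgProj_isHermitian (p b : ℕ) : (avgProj p b).IsHermitian := by
  ext ⟨i, k⟩ ⟨j, l⟩
  simp [avgProj, eq_comm]

lemma avgProj_isIdempotentElem (p b : ℕ) : IsIdempotentElem (avgProj p b) := by
  ext ⟨i, k⟩ ⟨j, l⟩
  have hb : (b : ℝ) ≠ 0 := Nat.cast_ne_zero.mpr k.pos.ne'
  rcases eq_or_ne i j with rfl | hij
  · simp [avgProj, mul_apply, Fintype.sum_prod_type, hb]
  · simp [avgProj, mul_apply, Fintype.sum_prod_type, hij]

theorem admm_map_real_eigenvalues_small_step {p b : ℕ}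
    (D : Fin b → Matrix (Fin p) (Fin p) ℝ) (hD : ∀ i, (D i).PosDef)
    (ρ : ℝ) (hρ : 0 < ρ)
    (hspec : ∀ i, ∀ x ∈ spectrum ℝ (D i), ρ < x) :
    ∀ μ ∈ spectrum ℂ
        ((((1 : Matrix (Fin p × Fin b) (Fin p × Fin b) ℝ) - avgProj p b -
            (1 + ρ⁻¹ • Matrix.blockDiagonal D)⁻¹) *
          (1 - (2 : ℝ) • avgProj p b)).map (algebraMap ℝ ℂ)),
      μ.im = 0 := by
  intro μ hμ
  set W : Matrix (Fin p × Fin b) (Fin p × Fin b) ℝ := 1 + ρ⁻¹ • blockDiagonal D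
  set U : Matrix (Fin p × Fin b) (Fin p × Fin b) ℝ := 1 - (2 : ℝ) • avgProj p b
  set V : Matrix (Fin p × Fin b) (Fin p × Fin b) ℝ := 1 - (2 : ℝ) • W⁻¹
  have hW : (W - (2 : ℝ) • 1).PosDef := by
    have : W - (2 : ℝ) • 1 = ρ⁻¹ • blockDiagonal fun i => D i - ρ • 1 := by
      rw [blockDiagonal_sub_smul_one, smul_sub, smul_smul, inv_mul_cancel₀ hρ.ne', one_smul]
      module
    rw [this]
    exact (PosDef.blockDiagonal fun i =>
      posDef_sub_smul_one_of_forall_lt (hD i).1 (hspec i)).smul (inv_pos.mpr hρ)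
  have hU : U.IsHermitian := isHermitian_one.sub ((avgProj_isHermitian p b).smul (.all _))
  obtain ⟨T, hT⟩ := (posDef_one_sub_smul_inv two_pos hW).exists_units_isHermitian_conj_mul hU
  have hM : (1 - avgProj p b - W⁻¹) * U = (2 : ℝ)⁻¹ • (1 + V * U) := by
    have : 1 - avgProj p b - W⁻¹ = (2 : ℝ)⁻¹ • (U + V) := by
      simp only [U, V]
      module
    rw [this, smul_mul_assoc, add_mul, (avgProj_isIdempotentElem p b).one_sub_two_smul_mul_self]
  refine im_eq_zero_of_mem_spectrum_map_of_isHermitian_conj T ?_ hμ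
  rw [hM, mul_smul_comm, smul_mul_assoc, mul_add, add_mul, mul_one, Units.inv_mul]
  exact (isHermitian_one.add hT).smul (.all _)
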